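/- arXiv:1804.07506 — 4 statements merged into one kernel-verified Lean document; each statement's English description precedes it below -/
import Mathlib

section
/- Proposition 1 (stability of the true closed loop from robust invariance). Let A ∈ ℝ^{n×n}, B ∈ ℝ^{n×m} and K_t ∈ ℝ^{m×n}. Assume the pair (A,B) is stabilizable, i.e. for every λ ∈ ℂ with |λ| ≥ 1 the n×(n+m) complex matrix [A − λI B] has rank n. Let Ŵ ⊆ ℝᵐ be a set with 0 in its interior, and let S ⊆ ℝⁿ be a nonempty compact set such that (A + BK_t)x + Bŵ ∈ S for all x ∈ S and all ŵ ∈ Ŵ. Then A + BK_t is Schur: every complex eigenvalue of A + BK_t has modulus strictly less than 1. -/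
open Matrix

/-- The PBH stabilizability condition: for every `λ ∈ ℂ` with `|λ| ≥ 1`, the matrix
`[A − λI  B]` has full row rank `n` over `ℂ`. -/
def Stabilizable {n m : ℕ} (A : Matrix (Fin n) (Fin n) ℝ)
    (B : Matrix (Fin n) (Fin m) ℝ) : Prop :=
  ∀ lam : ℂ, 1 ≤ ‖lam‖ →
    (Matrix.fromCols
      (A.map (Complex.ofReal) - lam • (1 : Matrix (Fin n) (Fin n) ℂ))
      (B.map (Complex.ofReal))).rank = n

/-- **Proposition 1 (stability of the true closed loop from robust invariance).**
If `(A,B)` is stabilizable, `Ŵ ⊆ ℝᵐ` has `0` in its interior, and a nonempty compact set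
`S ⊆ ℝⁿ` satisfies `(A + BK_t)x + Bŵ ∈ S` for all `x ∈ S`, `ŵ ∈ Ŵ`, then `A + BK_t` is
Schur: every complex eigenvalue of `A + BK_t` has modulus strictly less than `1`. -/
theorem closedLoop_schur_of_robust_invariant {n m : ℕ}
    (A : Matrix (Fin n) (Fin n) ℝ) (B : Matrix (Fin n) (Fin m) ℝ)
    (Kt : Matrix (Fin m) (Fin n) ℝ)
    (hstab : Stabilizable A B)
    (What : Set (EuclideanSpace ℝ (Fin m)))
    (hW0 : (0 : EuclideanSpace ℝ (Fin m)) ∈ interior What)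
    (S : Set (EuclideanSpace ℝ (Fin n)))
    (hSne : S.Nonempty) (hScomp : IsCompact S)
    (hinv : ∀ x ∈ S, ∀ wh ∈ What,
      ((WithLp.toLp 2 ((A + B * Kt).mulVec x + B.mulVec wh) : EuclideanSpace ℝ (Fin n))) ∈ S) :
    ∀ lam : ℂ,
      ((A + B * Kt).map (Complex.ofReal)
        - lam • (1 : Matrix (Fin n) (Fin n) ℂ)).det = 0 →
      ‖lam‖ < 1 := by
  intro lam hdet
  by_contra hlt
  push_neg at hlt
  -- left eigenvector
  obtain ⟨v, hv0, hvM⟩ := Matrix.exists_vecMul_eq_zero_iff.mpr hdet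
  have hsm : ∀ (u : Fin n → ℂ), Matrix.vecMul u (lam • (1 : Matrix (Fin n) (Fin n) ℂ))
      = lam • u := by
    intro u
    ext k
    simp [Matrix.vecMul, dotProduct, Matrix.smul_apply, Matrix.one_apply,
      mul_ite, mul_comm, Finset.sum_ite_eq, mul_left_comm]
  have heig : Matrix.vecMul v ((A + B * Kt).map Complex.ofReal) = lam • v := by
    have h := hvM
    rw [Matrix.vecMul_sub, sub_eq_zero] at h
    rw [h, hsm]
  have heig' : ∀ k, (∑ i, v i * ((A + B * Kt) i k : ℂ)) = lam * v k := by
    intro k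
    have h := congrFun heig k
    simpa [Matrix.vecMul, dotProduct, Matrix.map_apply, mul_comm] using h
  set vB : Fin m → ℂ := Matrix.vecMul v (B.map Complex.ofReal) with hvBdef
  have hvB : ∀ j', vB j' = ∑ i, v i * (B i j' : ℂ) := by
    intro j'
    simp [hvBdef, Matrix.vecMul, dotProduct, Matrix.map_apply]
  -- vB ≠ 0 by stabilizability
  have hvBne : vB ≠ 0 := by
    intro hz
    have hmapmul : (B * Kt).map (Complex.ofReal) =
        (B.map Complex.ofReal) * (Kt.map Complex.ofReal) := by
      ext i k
      simp only [Matrix.mul_apply, Matrix.map_apply, Complex.ofReal_sum, Complex.ofReal_mul]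
    have hvA : Matrix.vecMul v (A.map Complex.ofReal
        - lam • (1 : Matrix (Fin n) (Fin n) ℂ)) = 0 := by
      have h1 : Matrix.vecMul v ((A + B * Kt).map Complex.ofReal)
          = Matrix.vecMul v (A.map Complex.ofReal) := by
        rw [Matrix.map_add Complex.ofReal Complex.ofReal_add, Matrix.vecMul_add, hmapmul, ← Matrix.vecMul_vecMul,
          ← hvBdef, hz, Matrix.zero_vecMul, add_zero]
      rw [Matrix.vecMul_sub, h1.symm.trans heig, hsm, sub_self]
    have hF : Matrix.vecMul v (Matrix.fromCols
        (A.map (Complex.ofReal) - lam • (1 : Matrix (Fin n) (Fin n) ℂ))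
        (B.map (Complex.ofReal))) = 0 := by
      rw [Matrix.vecMul_fromCols, hvA, ← hvBdef, hz]
      ext (_ | _) <;> rfl
    have hrank := hstab lam hlt
    rw [Matrix.rank_eq_finrank_span_row] at hrank
    have hLI : LinearIndependent ℂ (fun i => (Matrix.fromCols
        (A.map (Complex.ofReal) - lam • (1 : Matrix (Fin n) (Fin n) ℂ))
        (B.map (Complex.ofReal))) i) :=
      linearIndependent_iff_card_eq_finrank_span.mpr (by
        rw [Set.finrank, Fintype.card_fin]; exact hrank.symm)
    have hinj := Matrix.vecMul_injective_iff.mpr hLI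
    exact hv0 (hinj (by
      show Matrix.vecMul v _ = Matrix.vecMul 0 _
      exact hF.trans (Matrix.zero_vecMul _).symm))
  obtain ⟨j, hj⟩ : ∃ j, vB j ≠ 0 := by
    by_contra h
    push_neg at h
    exact hvBne (funext h)
  set c : ℂ := vB j with hc
  -- the linear functional
  set f : EuclideanSpace ℝ (Fin n) → ℂ := fun x => ∑ i, v i * (x i : ℂ) with hf
  have hfc : Continuous f := by
    apply continuous_finset_sum
    intro i _
    exact continuous_const.mul (Complex.continuous_ofReal.comp ((continuous_apply i).comp (PiLp.continuous_ofLp 2 _)))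
  obtain ⟨x₀, hx₀, hmax⟩ := hScomp.exists_isMaxOn hSne
    ((continuous_norm.comp hfc).continuousOn)
  -- key step computation
  have hstep : ∀ (x : EuclideanSpace ℝ (Fin n)) (w : EuclideanSpace ℝ (Fin m)),
      f ((WithLp.toLp 2 ((A + B * Kt).mulVec x + B.mulVec w) : EuclideanSpace ℝ (Fin n)))
        = lam * f x + ∑ j', vB j' * (w j' : ℂ) := by
    intro x w
    have hcoord : ∀ i, (((WithLp.toLp 2 ((A + B * Kt).mulVec x + B.mulVec w)
        : EuclideanSpace ℝ (Fin n)) i : ℝ) : ℂ)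
        = ∑ k, ((A + B * Kt) i k : ℂ) * (x k : ℂ)
          + ∑ j', ((B i j' : ℝ) : ℂ) * (w j' : ℂ) := by
      intro i
      show (((A + B * Kt).mulVec x i + B.mulVec w i : ℝ) : ℂ) = _
      simp [Matrix.mulVec, dotProduct]
    calc f ((WithLp.toLp 2 ((A + B * Kt).mulVec x + B.mulVec w) : EuclideanSpace ℝ (Fin n)))
        = ∑ i, v i * (∑ k, ((A + B * Kt) i k : ℂ) * (x k : ℂ)
            + ∑ j', ((B i j' : ℝ) : ℂ) * (w j' : ℂ)) := by
          simp only [hf]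
          exact Finset.sum_congr rfl fun i _ => by rw [hcoord i]
      _ = ∑ i, ((∑ k, v i * ((A + B * Kt) i k : ℂ) * (x k : ℂ))
            + ∑ j', v i * ((B i j' : ℝ) : ℂ) * (w j' : ℂ)) := by
          refine Finset.sum_congr rfl fun i _ => ?_
          rw [mul_add, Finset.mul_sum, Finset.mul_sum]
          simp [mul_assoc]
      _ = (∑ i, ∑ k, v i * ((A + B * Kt) i k : ℂ) * (x k : ℂ))
            + ∑ i, ∑ j', v i * ((B i j' : ℝ) : ℂ) * (w j' : ℂ) :=
          Finset.sum_add_distrib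
      _ = lam * f x + ∑ j', vB j' * (w j' : ℂ) := by
          congr 1
          · rw [Finset.sum_comm, hf, Finset.mul_sum]
            refine Finset.sum_congr rfl fun k _ => ?_
            rw [← Finset.sum_mul, heig' k, mul_assoc]
          · rw [Finset.sum_comm]
            refine Finset.sum_congr rfl fun j' _ => ?_
            rw [hvB, Finset.sum_mul]
  -- choose the perturbation
  obtain ⟨ε, hε, hball⟩ := Metric.mem_nhds_iff.mp (mem_interior_iff_mem_nhds.mp hW0)
  set z : ℂ := lam * f x₀ with hz
  set s : ℝ := if 0 ≤ (z * (starRingEnd ℂ) c).re then ε / 2 else -(ε / 2) with hs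
  have hε2 : (0:ℝ) < ε / 2 := by linarith
  have hsne : s ≠ 0 := by
    rcases le_or_gt 0 ((z * (starRingEnd ℂ) c).re) with h | h
    · rw [hs, if_pos h]; exact ne_of_gt hε2
    · rw [hs, if_neg (not_le.mpr h)]; exact neg_ne_zero.mpr (ne_of_gt hε2)
  have hsabs : |s| = ε / 2 := by
    rcases le_or_gt 0 ((z * (starRingEnd ℂ) c).re) with h | h
    · rw [hs, if_pos h, abs_of_pos hε2]
    · rw [hs, if_neg (not_le.mpr h), abs_neg, abs_of_pos hε2]
  set w : EuclideanSpace ℝ (Fin m) := EuclideanSpace.single j s with hw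
  have hwW : w ∈ What := by
    apply hball
    rw [Metric.mem_ball, dist_zero_right, hw, EuclideanSpace.norm_single,
      Real.norm_eq_abs, hsabs]
    linarith
  have hsum : (∑ j', vB j' * ((w j' : ℝ) : ℂ)) = (s : ℂ) * c := by
    rw [hw]
    have : ∀ j', ((EuclideanSpace.single j s : EuclideanSpace ℝ (Fin m)) j' : ℂ)
        = if j' = j then (s : ℂ) else 0 := by
      intro j'
      rw [EuclideanSpace.single_apply]
      split <;> simp
    simp only [this, mul_ite, mul_zero]
    rw [Finset.sum_ite_eq' Finset.univ j (fun j' => vB j' * (s:ℂ))]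
    simp [mul_comm, hc]
  -- derive the contradiction
  have hyS := hinv x₀ hx₀ w hwW
  have hfy : f ((WithLp.toLp 2 ((A + B * Kt).mulVec x₀ + B.mulVec w) : EuclideanSpace ℝ (Fin n)))
      = z + (s : ℂ) * c := by rw [hstep, hsum, hz]
  have hle : ‖z + (s : ℂ) * c‖ ≤ ‖f x₀‖ := by
    have := hmax hyS
    simpa only [Set.mem_setOf_eq, Function.comp_apply, hfy] using this
  have hle2 : ‖f x₀‖ ≤ ‖z‖ := by
    rw [hz, norm_mul]
    nlinarith [norm_nonneg (f x₀), norm_nonneg lam]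
  have hnormle : Complex.normSq (z + (s : ℂ) * c) ≤ Complex.normSq z := by
    rw [← Complex.sq_norm, ← Complex.sq_norm]
    have h := hle.trans hle2
    nlinarith [norm_nonneg (z + (s:ℂ)*c), norm_nonneg z]
  have hre : (z * (starRingEnd ℂ) ((s : ℂ) * c)).re = s * (z * (starRingEnd ℂ) c).re := by
    rw [_root_.map_mul, Complex.conj_ofReal]
    rw [show z * ((s:ℂ) * (starRingEnd ℂ) c) = (s:ℂ) * (z * (starRingEnd ℂ) c) by ring]
    exact Complex.re_ofReal_mul s _
  have hcross : 0 ≤ s * (z * (starRingEnd ℂ) c).re := by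
    rcases le_or_gt 0 ((z * (starRingEnd ℂ) c).re) with h | h
    · have hsv : s = ε / 2 := by rw [hs, if_pos h]
      rw [hsv]; exact mul_nonneg (le_of_lt hε2) h
    · have hsv : s = -(ε / 2) := by rw [hs, if_neg (not_le.mpr h)]
      rw [hsv]; nlinarith
  have hpos : 0 < Complex.normSq ((s : ℂ) * c) := by
    rw [Complex.normSq_pos]
    intro h0
    rcases mul_eq_zero.mp h0 with h | h
    · exact hsne (by exact_mod_cast h)
    · exact hj h
  have := Complex.normSq_add z ((s : ℂ) * c)
  rw [hre] at this
  linarith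
end

section
/- Theorem 2 (recursive feasibility of the persistence-of-excitation optimization). Let m, h, l ≥ 1 be integers, ρ0 > 0, and Ŵ ⊆ ℝᵐ a nonempty set. For a sequence ŵ : ℕ → ℝᵐ and a time i, define its l-periodic extension beyond i as the sequence e^{(i)} : ℕ → ℝᵐ with e^{(i)}(t) = ŵ(t) for t ≤ i and e^{(i)}(t) = e^{(i)}(t − l) for t > i, and let E^{(i)}_t ∈ ℝ^{m×h} be the matrix whose (j+1)-th column is e^{(i)}(t−j), j = 0,…,h−1. Say the PE constraints hold at time i ≥ h+l−1 if ŵ(i) ∈ Ŵ and, for every k ∈ {0,…,h−1}, Σ_{j=0}^{l−1} E^{(i)}_{i+k−j} (E^{(i)}_{i+k−j})ᵀ − ρ0·I is positive definite. Suppose ŵ satisfies the initialization: ŵ(j) ∈ Ŵ for 0 ≤ j ≤ h+l−2, ŵ(j) = ŵ(j−l) for l ≤ j ≤ h+l−2, and Σ_{j=0}^{l−1} Ŵ_{(h+l−2)−j} Ŵ_{(h+l−2)−j}ᵀ − ρ0·I is positive definite (where Ŵ_k ∈ ℝ^{m×h} stacks ŵ(k),…,ŵ(k−h+1) as columns). Then: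 (a) for every i ≥ h+l−1, if the PE constraints hold at all times t with h+l−1 ≤ t < i, then the sequence obtained from ŵ by setting ŵ(i) := ŵ(i−l) satisfies the PE constraints at time i (so a feasible choice always exists); and (b) if the PE constraints hold at every time i ≥ h+l−1, then Σ_{j=0}^{l−1} Ŵ_{i−j} Ŵ_{i−j}ᵀ − ρ0·I is positive definite for every i ≥ h+l−2, i.e. the sequence {ŵ(i)} is SPE of order h at every such time. -/
open Matrix Finset

/-- The stacked matrix `Ŵ_k ∈ ℝ^{m×h}` whose `(j+1)`-th column is `w (k - j)`. -/
noncomputable def stacked {ι : Type*} (w : ℕ → ι → ℝ) (h k : ℕ) :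
    Matrix ι (Fin h) ℝ := Matrix.of fun a j => w (k - (j : ℕ)) a

/-- The excitation measure `Σ_{j=0}^{l-1} Ŵ_{i-j} Ŵ_{i-j}ᵀ`. -/
noncomputable def exciteSum {ι : Type*} [Fintype ι] (w : ℕ → ι → ℝ) (h l i : ℕ) :
    Matrix ι ι ℝ :=
  ∑ j ∈ Finset.range l, stacked w h (i - j) * (stacked w h (i - j))ᵀ

/-- A sequence is strongly persistently exciting (SPE) of order `h` at time `i`. -/
def SPE {ι : Type*} [Fintype ι] [DecidableEq ι] (φ : ℕ → ι → ℝ) (h i : ℕ) : Prop :=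
  ∃ l : ℕ, 1 ≤ l ∧ h + l ≤ i + 2 ∧ ∃ ρ0 ρ1 : ℝ, 0 < ρ0 ∧ ρ0 < ρ1 ∧
    (exciteSum φ h l i - ρ0 • (1 : Matrix ι ι ℝ)).PosDef ∧
    ((ρ1 • (1 : Matrix ι ι ℝ)) - exciteSum φ h l i).PosDef

/-- The `l`-periodic extension of `w` beyond time `i`: it agrees with `w` up to time `i`
and satisfies `e(t) = e(t - l)` for `t > i`. -/
def pext {α : Type*} (w : ℕ → α) (l i : ℕ) : ℕ → α
  | t => if t ≤ i ∨ l = 0 then w t else pext w l i (t - l)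
  termination_by t => t
  decreasing_by
    rename_i ht
    push_neg at ht
    omega

/-- The PE constraints of the optimization `(16)` hold at time `i`: the new value lies in
`Ŵ`, and the excitation measure of the `l`-periodic extension beyond `i` exceeds `ρ0·I`
on the whole window `i, i+1, …, i+h-1`. -/
def PEok {m : ℕ} (w : ℕ → Fin m → ℝ) (What : Set (Fin m → ℝ)) (h l : ℕ) (ρ0 : ℝ)
    (i : ℕ) : Prop :=
  w i ∈ What ∧ ∀ k < h,
    (exciteSum (pext w l i) h l (i + k) - ρ0 • (1 : Matrix (Fin m) (Fin m) ℝ)).PosDef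

/-!
Let `e` be the `l`-periodic extension of `ŵ` beyond time `i - 1`. Choosing `ŵ(i) := ŵ(i - l)` makes
the extension beyond `i` equal to `e`, so the constraints at time `i` concern the excitation
measure of `e` on the window `i, …, i + h - 1`. Once all `h` columns of `Ŵ_t` lie in the periodic
part, `Ŵ_{t+1} = Ŵ_{t+1-l}`, and the sliding sum `Σ_{j<l} Ŵ_{t-j} Ŵ_{t-j}ᵀ` does not change from
`t` to `t + 1`. Hence the measure on the new window repeats values already certified at time
`i - 1`, or, at the first step, the value certified by the initialization.
-/

open scoped MatrixOrder ComplexOrder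

theorem Matrix.IsHermitian.exists_posDef_smul_one_sub {𝕜 n : Type*} [RCLike 𝕜] [Fintype n]
    [DecidableEq n] {M : Matrix n n 𝕜} (hM : M.IsHermitian) (ρ : ℝ) :
    ∃ ρ1 : ℝ, ρ < ρ1 ∧ (ρ1 • (1 : Matrix n n 𝕜) - M).PosDef := by
  obtain ⟨b, hb⟩ := (finite_real_spectrum (A := M)).bddAbove
  refine ⟨max ρ b + 1, by linarith [le_max_left ρ b], ?_⟩
  have hsa : IsSelfAdjoint (algebraMap ℝ (Matrix n n 𝕜) (max ρ b + 1) - M) :=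
    (IsSelfAdjoint.algebraMap _ (.all _)).sub hM
  rw [← isStrictlyPositive_iff_posDef, ← Algebra.algebraMap_eq_smul_one,
    StarOrderedRing.isStrictlyPositive_iff_spectrum_pos (R := ℝ) _ hsa,
    ← spectrum.singleton_sub_eq]
  rintro _ ⟨_, rfl, x, hx, rfl⟩
  linarith [hb hx, le_max_right ρ b]

section Stacked

variable {ι : Type*} {e w : ℕ → ι → ℝ} {h l : ℕ}

theorem stacked_congr {k : ℕ} (he : ∀ t ≤ k, e t = w t) : stacked e h k = stacked w h k := by
  ext a j
  simp only [stacked, of_apply, he _ (Nat.sub_le _ _)]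

theorem stacked_eq_stacked_sub {N k : ℕ} (hper : ∀ u, N ≤ u → e u = e (u - l))
    (hk : N + h ≤ k + 1) : stacked e h k = stacked e h (k - l) := by
  ext a j
  simp only [stacked, of_apply, hper (k - j) (by omega), Nat.sub_right_comm]

variable [Fintype ι]

theorem exciteSum_congr {i : ℕ} (he : ∀ t ≤ i, e t = w t) :
    exciteSum e h l i = exciteSum w h l i :=
  Finset.sum_congr rfl fun _ _ => by
    rw [stacked_congr fun t ht => he t (ht.trans (Nat.sub_le _ _))]

theorem exciteSum_isHermitian (w : ℕ → ι → ℝ) (h l i : ℕ) : (exciteSum w h l i).IsHermitian := by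
  unfold exciteSum
  refine isSelfAdjoint_sum (R := Matrix ι ι ℝ) _ fun j _ => ?_
  have hself := isHermitian_mul_conjTranspose_self (stacked w h (i - j))
  rwa [conjTranspose_eq_transpose_of_trivial] at hself

theorem exciteSum_succ_of_stacked_eq {t : ℕ} (hl : l ≠ 0)
    (hs : stacked e h (t + 1) = stacked e h (t + 1 - l)) :
    exciteSum e h l (t + 1) = exciteSum e h l t := by
  obtain ⟨l, rfl⟩ := Nat.exists_eq_succ_of_ne_zero hl
  rw [exciteSum, exciteSum, Finset.sum_range_succ', Finset.sum_range_succ, Nat.sub_zero, hs,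
    show t + 1 - (l + 1) = t - l by omega]
  congr 1
  exact Finset.sum_congr rfl fun j _ => by rw [Nat.add_sub_add_right]

theorem exciteSum_add_of_periodic {N t : ℕ} (hl : l ≠ 0) (hper : ∀ u, N ≤ u → e u = e (u - l))
    (ht : N + h ≤ t + 2) (n : ℕ) : exciteSum e h l (t + n) = exciteSum e h l t := by
  induction n with
  | zero => rfl
  | succ n ih =>
    rw [← add_assoc, exciteSum_succ_of_stacked_eq hl (stacked_eq_stacked_sub hper (by omega)), ih]

end Stacked

section PeriodicExtension

variable {α : Type*} (w : ℕ → α) {l i : ℕ}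

theorem pext_of_le {t : ℕ} (ht : t ≤ i) : pext w l i t = w t := by
  rw [pext, if_pos (Or.inl ht)]

theorem pext_of_lt (hl : l ≠ 0) {t : ℕ} (ht : i < t) : pext w l i t = pext w l i (t - l) := by
  rw [pext, if_neg]
  omega

theorem pext_update_self_sub (hl : l ≠ 0) (hi : 1 ≤ i) :
    pext (Function.update w i (w (i - l))) l i = pext w l (i - 1) := by
  funext t
  induction t using Nat.strong_induction_on with
  | _ t ih =>
    rcases lt_trichotomy t i with hti | rfl | hti
    · rw [pext_of_le _ hti.le, pext_of_le _ (by omega), Function.update_of_ne hti.ne]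
    · rw [pext_of_le _ le_rfl, Function.update_self, pext_of_lt _ hl (by omega),
        pext_of_le _ (by omega)]
    · rw [pext_of_lt _ hl hti, pext_of_lt w (i := i - 1) hl (by omega), ih _ (by omega)]

end PeriodicExtension

section ExcitationOfExtension

variable {ι : Type*} [Fintype ι] (w : ℕ → ι → ℝ) {h l : ℕ}

/-- From time `i + h - 1` on, every column of the stacked matrix lies in the periodic part. -/
theorem exciteSum_pext_add (hl : l ≠ 0) (i n : ℕ) :
    exciteSum (pext w l i) h l (i + n) = exciteSum (pext w l i) h l (i + min n (h - 1)) := by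
  rcases le_total n (h - 1) with hn | hn
  · rw [min_eq_left hn]
  · obtain ⟨d, rfl⟩ := Nat.exists_eq_add_of_le hn
    rw [min_eq_right hn, ← add_assoc]
    exact exciteSum_add_of_periodic (N := i + 1) hl (fun u hu => pext_of_lt w hl hu) (by omega) d

theorem exciteSum_pext_add_eq_of_periodic {i : ℕ} (hl : l ≠ 0)
    (hper : ∀ j, l ≤ j → j ≤ i → w j = w (j - l)) (hi : h + l ≤ i + 2) (n : ℕ) :
    exciteSum (pext w l i) h l (i + n) = exciteSum w h l i := by
  have hperiodic : ∀ u, l ≤ u → pext w l i u = pext w l i (u - l) := by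
    intro u hu
    by_cases hui : u ≤ i
    · rw [pext_of_le w hui, pext_of_le w (by omega), hper u hu hui]
    · exact pext_of_lt w hl (by omega)
  rw [exciteSum_add_of_periodic hl hperiodic (by omega) n]
  exact exciteSum_congr fun t ht => pext_of_le w ht

end ExcitationOfExtension

theorem pe_optimization_recursive_feasibility_general {m : ℕ} (h l : ℕ)
    (hh : 1 ≤ h) (hl : 1 ≤ l)
    (ρ0 : ℝ) (hρ0 : 0 < ρ0)
    (What : Set (Fin m → ℝ))
    (w : ℕ → Fin m → ℝ)
    (hmem : ∀ j : ℕ, j + 2 ≤ h + l → w j ∈ What)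
    (hper : ∀ j : ℕ, l ≤ j → j + 2 ≤ h + l → w j = w (j - l))
    (hpe : (exciteSum w h l (h + l - 2) - ρ0 • (1 : Matrix (Fin m) (Fin m) ℝ)).PosDef) :
    (∀ i : ℕ, h + l ≤ i + 1 →
      (∀ t : ℕ, h + l ≤ t + 1 → t < i → PEok w What h l ρ0 t) →
      PEok (Function.update w i (w (i - l))) What h l ρ0 i) ∧
    ((∀ i : ℕ, h + l ≤ i + 1 → PEok w What h l ρ0 i) →
      ∀ i : ℕ, h + l ≤ i + 2 →
        (exciteSum w h l i - ρ0 • (1 : Matrix (Fin m) (Fin m) ℝ)).PosDef ∧ SPE w h i) := by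
  have hl0 : l ≠ 0 := Nat.one_le_iff_ne_zero.mp hl
  refine ⟨fun i hi hprev => ⟨?_, fun k hk => ?_⟩, fun hall i hi => ?_⟩
  · rw [Function.update_self]
    by_cases hinit : i - l + 2 ≤ h + l
    · exact hmem _ hinit
    · exact (hprev (i - l) (by omega) (by omega)).1
  · rw [pext_update_self_sub w hl0 (by omega), show i + k = i - 1 + (k + 1) by omega]
    rcases (show h + l ≤ i ∨ i - 1 = h + l - 2 by omega) with hlate | hfirst
    · rw [exciteSum_pext_add w hl0]
      exact (hprev (i - 1) (by omega) (by omega)).2 _ (by omega)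
    · rwa [hfirst, exciteSum_pext_add_eq_of_periodic w hl0
        (fun j hj hji => hper j hj (by omega)) (by omega)]
  · have hpd : (exciteSum w h l i - ρ0 • (1 : Matrix (Fin m) (Fin m) ℝ)).PosDef := by
      rcases (show h + l ≤ i + 1 ∨ i = h + l - 2 by omega) with hlate | rfl
      · simpa only [add_zero, exciteSum_congr fun t => pext_of_le w]
          using (hall i hlate).2 0 (by omega)
      · exact hpe
    obtain ⟨ρ1, hρ1, hupper⟩ := (exciteSum_isHermitian w h l i).exists_posDef_smul_one_sub ρ0
    exact ⟨hpd, l, hl, hi, ρ0, ρ1, hρ0, hρ1, hpd, hupper⟩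

/-- **Theorem 2 (recursive feasibility of the persistence-of-excitation optimization).**
With a buffer initialization on `[0, h+l-2]`: (a) at every time `i ≥ h+l-1`, if the PE
constraints held at all earlier times `t ∈ [h+l-1, i)`, then choosing `ŵ(i) := ŵ(i-l)`
satisfies the PE constraints at time `i`; (b) if the PE constraints hold at every time
`i ≥ h+l-1`, then the excitation measure exceeds `ρ0·I` at every `i ≥ h+l-2`, i.e. the
sequence is SPE of order `h` at every such time. -/
theorem pe_optimization_recursive_feasibility {m : ℕ} (h l : ℕ)
    (hm : 1 ≤ m) (hh : 1 ≤ h) (hl : 1 ≤ l)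
    (ρ0 : ℝ) (hρ0 : 0 < ρ0)
    (What : Set (Fin m → ℝ)) (hWne : What.Nonempty)
    (w : ℕ → Fin m → ℝ)
    (hmem : ∀ j : ℕ, j + 2 ≤ h + l → w j ∈ What)
    (hper : ∀ j : ℕ, l ≤ j → j + 2 ≤ h + l → w j = w (j - l))
    (hpe : (exciteSum w h l (h + l - 2) - ρ0 • (1 : Matrix (Fin m) (Fin m) ℝ)).PosDef) :
    (∀ i : ℕ, h + l ≤ i + 1 →
      (∀ t : ℕ, h + l ≤ t + 1 → t < i → PEok w What h l ρ0 t) →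
      PEok (Function.update w i (w (i - l))) What h l ρ0 i) ∧
    ((∀ i : ℕ, h + l ≤ i + 1 → PEok w What h l ρ0 i) →
      ∀ i : ℕ, h + l ≤ i + 2 →
        (exciteSum w h l i - ρ0 • (1 : Matrix (Fin m) (Fin m) ℝ)).PosDef ∧ SPE w h i) :=
  pe_optimization_recursive_feasibility_general h l hh hl ρ0 hρ0 What w hmem hper hpe
end

section
/- Pontryagin difference of a convex compact set with a scaled copy of itself. Let U ⊆ ℝᵐ be a nonempty, compact, convex set and let α ∈ [0,1]. Then the Pontryagin difference U ⊖ αU := {x ∈ ℝᵐ : x + αu ∈ U for all u ∈ U} equals the scaled set (1−α)U = {(1−α)u : u ∈ U}. -/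
/-!
A point `x` of the difference satisfies `x + α • U ⊆ U`. For `α < 1` the map `u ↦ x + α • u` is a
contraction of the complete set `U`, and its fixed point `u` gives `x = (1 - α) • u`. For `α = 1`
all translates `n • x + u` stay in the bounded set `U`, forcing `x = 0`. Conversely, convexity gives
`(1 - α) • v + α • u ∈ U`.
-/

open Pointwise

section
variable {E : Type*} [NormedAddCommGroup E] [NormedSpace ℝ E] {U : Set E} {x : E} {α : ℝ}

theorem Convex.one_sub_smul_subset_setOf_forall_add_smul_mem (hU : Convex ℝ U)
    (hα0 : 0 ≤ α) (hα1 : α ≤ 1) : (1 - α) • U ⊆ {x | ∀ u ∈ U, x + α • u ∈ U} := by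
  rintro _ ⟨v, hv, rfl⟩ u hu
  exact hU hv hu (sub_nonneg.2 hα1) hα0 (sub_add_cancel 1 α)

theorem Bornology.IsBounded.eq_zero_of_forall_add_mem (hU : Bornology.IsBounded U)
    (hne : U.Nonempty) (hx : ∀ u ∈ U, x + u ∈ U) : x = 0 := by
  obtain ⟨u₀, hu₀⟩ := hne
  obtain ⟨C, hC⟩ := Metric.isBounded_iff.1 hU
  have hmem : ∀ n : ℕ, n • x + u₀ ∈ U := by
    intro n
    induction n with
    | zero => simpa using hu₀
    | succ n ih => simpa [succ_nsmul', add_assoc] using hx _ ih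
  have hle : ∀ n : ℕ, n • ‖x‖ ≤ C := fun n => by
    simpa only [dist_eq_norm, add_sub_cancel_right, RCLike.norm_nsmul ℝ] using hC (hmem n) hu₀
  by_contra hx0
  obtain ⟨n, hn⟩ := Archimedean.arch (C + 1) (norm_pos_iff.2 hx0)
  linarith [hle n]

theorem IsComplete.exists_add_smul_eq_of_forall_add_smul_mem (hU : IsComplete U)
    (hne : U.Nonempty) (hα0 : 0 ≤ α) (hα1 : α < 1) (hx : ∀ u ∈ U, x + α • u ∈ U) :
    ∃ u ∈ U, x + α • u = u := by
  obtain ⟨u₀, hu₀⟩ := hne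
  have hmaps : Set.MapsTo (fun u => x + α • u) U U := hx
  have hcontr : ContractingWith ⟨α, hα0⟩ (hmaps.restrict _ U U) := by
    refine ⟨hα1, LipschitzWith.of_dist_le_mul fun u v => le_of_eq ?_⟩
    change dist (x + α • (u : E)) (x + α • (v : E)) = α * dist (u : E) v
    rw [dist_add_left, dist_smul₀, Real.norm_of_nonneg hα0]
  obtain ⟨u, hu, hfix, -⟩ := hcontr.exists_fixedPoint' hU hmaps hu₀ (edist_ne_top _ _)
  exact ⟨u, hu, hfix⟩

theorem IsCompact.setOf_forall_add_smul_mem_subset (hU : IsCompact U) (hne : U.Nonempty)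
    (hα0 : 0 ≤ α) (hα1 : α ≤ 1) : {x | ∀ u ∈ U, x + α • u ∈ U} ⊆ (1 - α) • U := by
  intro x hx
  rcases hα1.lt_or_eq with hα1 | rfl
  · obtain ⟨u, hu, hfix⟩ := hU.isComplete.exists_add_smul_eq_of_forall_add_smul_mem hne hα0 hα1 hx
    exact ⟨u, hu, by simp only [sub_smul, one_smul]; exact sub_eq_of_eq_add hfix.symm⟩
  · obtain rfl := hU.isBounded.eq_zero_of_forall_add_mem hne (by simpa using hx)
    simp [Set.zero_smul_set hne]

end

/-- **Pontryagin difference of a convex compact set with a scaled copy of itself.**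
For a nonempty compact convex `U ⊆ ℝᵐ` and `α ∈ [0,1]`,
`U ⊖ αU = {x : x + αu ∈ U for all u ∈ U}` equals `(1 − α) • U`. -/
theorem pontryagin_diff_self_smul {m : ℕ}
    (U : Set (Fin m → ℝ)) (hne : U.Nonempty) (hcomp : IsCompact U) (hconv : Convex ℝ U)
    (α : ℝ) (hα : α ∈ Set.Icc (0 : ℝ) 1) :
    {x : Fin m → ℝ | ∀ u ∈ U, x + α • u ∈ U} = (1 - α) • U :=
  (hcomp.setOf_forall_add_smul_mem_subset hne hα.1 hα.2).antisymm
    (hconv.one_sub_smul_subset_setOf_forall_add_smul_mem hα.1 hα.2)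
end

section
/- Persistence of excitation is preserved under a vanishing additive perturbation (the property of Lemma 2.2 of Bai–Sastry used in the proof of Theorem 3). Let p, l ≥ 1 be integers, ρ0 > 0, c > 0, and let φ : ℕ → ℝ^p satisfy ‖φ(i)‖ ≤ c for all i and Σ_{j=0}^{l−1} φ(i−j)φ(i−j)ᵀ − ρ0·I positive definite for all i ≥ i0, for some i0 ≥ l−1. Let e : ℕ → ℝ^p be any sequence with e(i) → 0 as i → ∞. Then there exist an integer i1 ≥ i0 and a real ρ0' > 0 such that for all i ≥ i1, Σ_{j=0}^{l−1} (φ(i−j)+e(i−j))(φ(i−j)+e(i−j))ᵀ − ρ0'·I is positive definite. -/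
open Matrix Finset

private lemma quad_vecMulVec {p : ℕ} (v x : Fin p → ℝ) :
    x ⬝ᵥ (Matrix.vecMulVec v v *ᵥ x) = (v ⬝ᵥ x) ^ 2 := by
  simp only [dotProduct, Matrix.mulVec, Matrix.vecMulVec_apply, dotProduct]
  rw [pow_two, Finset.sum_mul_sum]
  congr 1; ext i; rw [Finset.mul_sum]; congr 1; ext j; ring

private lemma herm_vecMulVec {p : ℕ} (v : Fin p → ℝ) :
    (Matrix.vecMulVec v v).IsHermitian := by
  ext i j
  simp [Matrix.vecMulVec_apply, mul_comm]

private lemma dot_le {p : ℕ} (v x : EuclideanSpace ℝ (Fin p)) :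
    |(v : Fin p → ℝ) ⬝ᵥ x| ≤ ‖v‖ * ‖x‖ := by
  have := abs_real_inner_le_norm v x
  simpa [PiLp.inner_apply, dotProduct, RCLike.inner_apply, mul_comm] using this

private lemma dot_self_eq {p : ℕ} (x : EuclideanSpace ℝ (Fin p)) :
    (x : Fin p → ℝ) ⬝ᵥ x = ‖x‖ ^ 2 := by
  rw [← real_inner_self_eq_norm_sq x]
  simp only [PiLp.inner_apply, RCLike.inner_apply, conj_trivial, dotProduct]

private lemma quad_form {p : ℕ} (l : ℕ) (v : ℕ → Fin p → ℝ) (ρ : ℝ)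
    (x : Fin p → ℝ) :
    x ⬝ᵥ (((∑ j ∈ Finset.range l, Matrix.vecMulVec (v j) (v j))
        - ρ • (1 : Matrix (Fin p) (Fin p) ℝ)) *ᵥ x)
      = (∑ j ∈ Finset.range l, (v j ⬝ᵥ x) ^ 2) - ρ * (x ⬝ᵥ x) := by
  rw [Matrix.sub_mulVec, dotProduct_sub]
  congr 1
  · induction l with
    | zero => simp
    | succ n ih =>
        rw [Finset.sum_range_succ, Finset.sum_range_succ, Matrix.add_mulVec,
          dotProduct_add, ih, quad_vecMulVec]
  · rw [Matrix.smul_mulVec, Matrix.one_mulVec, dotProduct_smul,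
      smul_eq_mul]

/-- **Persistence of excitation is preserved under a vanishing additive perturbation**
(the property of Lemma 2.2 of Bai–Sastry used in the proof of Theorem 3).
If `φ` is bounded and `Σ_{j=0}^{l-1} φ(i-j)φ(i-j)ᵀ − ρ0·I` is positive definite for all
`i ≥ i0`, and `e(i) → 0`, then there are `i1 ≥ i0` and `ρ0' > 0` such that
`Σ_{j=0}^{l-1} (φ(i-j)+e(i-j))(φ(i-j)+e(i-j))ᵀ − ρ0'·I` is positive definite for `i ≥ i1`. -/
theorem pe_preserved_under_vanishing_perturbation {p : ℕ} (hp : 1 ≤ p)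
    (l : ℕ) (hl : 1 ≤ l) (ρ0 c : ℝ) (hρ0 : 0 < ρ0) (hc : 0 < c)
    (φ : ℕ → EuclideanSpace ℝ (Fin p)) (hφb : ∀ i : ℕ, ‖φ i‖ ≤ c)
    (i0 : ℕ) (hi0 : l ≤ i0 + 1)
    (hpe : ∀ i : ℕ, i0 ≤ i →
      ((∑ j ∈ Finset.range l, Matrix.vecMulVec (φ (i - j)) (φ (i - j)))
        - ρ0 • (1 : Matrix (Fin p) (Fin p) ℝ)).PosDef)
    (e : ℕ → EuclideanSpace ℝ (Fin p))
    (he : Filter.Tendsto e Filter.atTop (nhds 0)) :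
    ∃ i1 : ℕ, i0 ≤ i1 ∧ ∃ ρ0' : ℝ, 0 < ρ0' ∧ ∀ i : ℕ, i1 ≤ i →
      ((∑ j ∈ Finset.range l,
          Matrix.vecMulVec (φ (i - j) + e (i - j)) (φ (i - j) + e (i - j)))
        - ρ0' • (1 : Matrix (Fin p) (Fin p) ℝ)).PosDef := by
  have hl' : (0 : ℝ) < l := by exact_mod_cast hl
  set ε : ℝ := ρ0 / (4 * c * l) with hεdef
  have hε : 0 < ε := by positivity
  -- find N such that ‖e n‖ ≤ ε for n ≥ N
  obtain ⟨N, hNn⟩ := (Metric.tendsto_atTop.mp he) ε hε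
  have hNe : ∀ n : ℕ, N ≤ n → ‖e n‖ ≤ ε := fun n hn => by
    have := hNn n hn
    rw [dist_zero_right] at this
    exact this.le
  refine ⟨max i0 (N + l), le_max_left _ _, ρ0 / 2, by positivity, ?_⟩
  intro i hi
  have hii0 : i0 ≤ i := le_trans (le_max_left _ _) hi
  have hiNl : N + l ≤ i := le_trans (le_max_right _ _) hi
  rw [Matrix.posDef_iff_dotProduct_mulVec]
  constructor
  · -- Hermitian
    apply Matrix.IsHermitian.sub
    · show (∑ j ∈ Finset.range l, _)ᴴ = _
      rw [Matrix.conjTranspose_sum]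
      exact Finset.sum_congr rfl fun j _ => herm_vecMulVec _
    · show (_ : Matrix (Fin p) (Fin p) ℝ)ᴴ = _
      ext a b
      simp [Matrix.one_apply, eq_comm]
  · intro x hx
    -- view `x` as an element of the Euclidean space
    set x' : EuclideanSpace ℝ (Fin p) := (WithLp.equiv 2 (Fin p → ℝ)).symm x
      with hx'def
    have hxne : x' ≠ 0 := by simpa [hx'def] using hx
    have hxn : 0 < ‖x'‖ := norm_pos_iff.mpr hxne
    rw [star_trivial, quad_form]
    -- old PE bound
    have hold := (hpe i hii0).dotProduct_mulVec_pos hx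
    rw [star_trivial, quad_form] at hold
    have hdotself : (x ⬝ᵥ x) = ‖x'‖ ^ 2 := dot_self_eq x'
    -- pointwise bound for each j
    have hterm : ∀ j ∈ Finset.range l,
        ((φ (i - j) : Fin p → ℝ) ⬝ᵥ x) ^ 2 - 2 * c * ε * ‖x'‖ ^ 2
          ≤ (((φ (i - j) + e (i - j)) : Fin p → ℝ) ⬝ᵥ x) ^ 2 := by
      intro j hj
      have hjl : j < l := Finset.mem_range.mp hj
      have hNij : N ≤ i - j := by omega
      have heε : ‖e (i - j)‖ ≤ ε := hNe _ hNij
      set a : ℝ := (φ (i - j) : Fin p → ℝ) ⬝ᵥ x with ha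
      set b : ℝ := (e (i - j) : Fin p → ℝ) ⬝ᵥ x with hb
      have hadd : (((φ (i - j) + e (i - j)) : Fin p → ℝ) ⬝ᵥ x) = a + b := by
        show ((φ (i - j) : Fin p → ℝ) + (e (i - j) : Fin p → ℝ)) ⬝ᵥ x = a + b
        rw [add_dotProduct]
      rw [hadd]
      have haB : |a| ≤ c * ‖x'‖ :=
        le_trans (dot_le (φ (i - j)) x')
          (mul_le_mul_of_nonneg_right (hφb (i - j)) hxn.le)
      have hbB : |b| ≤ ε * ‖x'‖ :=
        le_trans (dot_le (e (i - j)) x')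
          (mul_le_mul_of_nonneg_right heε hxn.le)
      have hab : |a| * |b| ≤ (c * ‖x'‖) * (ε * ‖x'‖) :=
        mul_le_mul haB hbB (abs_nonneg b) (by positivity)
      have hab' : |a| * |b| ≤ c * ε * ‖x'‖ ^ 2 := by
        calc |a| * |b| ≤ (c * ‖x'‖) * (ε * ‖x'‖) := hab
          _ = c * ε * ‖x'‖ ^ 2 := by ring
      have habneg : -(c * ε * ‖x'‖ ^ 2) ≤ a * b := by
        have h1 : -(|a| * |b|) ≤ a * b := by
          rw [← abs_mul]; exact neg_abs_le _
        linarith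
      have hexp : (a + b) ^ 2 = a ^ 2 + 2 * (a * b) + b ^ 2 := by ring
      have hb2 : 0 ≤ b ^ 2 := sq_nonneg b
      linarith
    -- sum the bounds
    have hsum : (∑ j ∈ Finset.range l, ((φ (i - j) : Fin p → ℝ) ⬝ᵥ x) ^ 2)
          - l * (2 * c * ε * ‖x'‖ ^ 2)
        ≤ ∑ j ∈ Finset.range l,
            (((φ (i - j) + e (i - j)) : Fin p → ℝ) ⬝ᵥ x) ^ 2 := by
      have h := Finset.sum_le_sum hterm
      rw [Finset.sum_sub_distrib, Finset.sum_const, Finset.card_range,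
        nsmul_eq_mul] at h
      linarith
    have hεval : (l : ℝ) * (2 * c * ε * ‖x'‖ ^ 2) = (ρ0 / 2) * ‖x'‖ ^ 2 := by
      rw [hεdef]; field_simp; ring
    have hhalf : (ρ0 / 2) * ‖x'‖ ^ 2 ≤ ρ0 * ‖x'‖ ^ 2 := by nlinarith
    rw [hdotself] at hold ⊢
    simp only [WithLp.ofLp_add]
    linarith
end
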